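/- arXiv:1711.07184 — 4 statements merged into one kernel-verified Lean document; each statement's English description precedes it below -/
import Mathlib

section
/- Let $\alpha\ge 0$ and let $w:[0,\infty)\to\mathbb{R}^m$ satisfy $\frac{dw}{dt}+\alpha w + p(t) = g(t)$ where $p$ is an $\mathbb{R}^m$-valued polynomial and $|g(t)| \le C e^{-\delta t}$ for some $C,\delta>0$. Assume additionally that either $\alpha>0$, or ($\alpha=0$ and $w$ is bounded). Then there exists an $\mathbb{R}^m$-valued polynomial $q$ solving $\frac{dq}{dt}+\alpha q+p(t)=0$ and a constant $\delta'\in(0,\delta]$ such that $|w(t)-q(t)| = O(e^{-\delta' t})$ as $t\to\infty$. -/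
open Filter

def IsPolyVec {m : ℕ} (f : ℝ → (Fin m → ℝ)) : Prop :=
  ∀ i, ∃ P : Polynomial ℝ, ∀ t, f t i = P.eval t

/-!
Subtracting a polynomial solution `q` of `q' + α q + p = 0` (for `α ≠ 0` the operator
`d/dt + α` is invertible on polynomials, for `α = 0` it is antidifferentiation) leaves
`z = w - q` with `z' + α z = g`. For `α > 0`, variation of constants bounds `‖z t‖` by a
multiple of `e^{-δ' t}` for any `δ' < α` with `δ' ≤ δ`. For `α = 0`, `z' = g` is exponentially
small, so `z` converges to a constant `L` at rate `e^{-δ t}`, and `q + L` is the required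
polynomial.
-/

open Polynomial Real

namespace Polynomial

variable {K : Type*} [Field K]

theorem exists_derivative_eq [CharZero K] (P : K[X]) : ∃ Q : K[X], derivative Q = P := by
  induction P using Polynomial.induction_on' with
  | add p q hp hq =>
    obtain ⟨Qp, rfl⟩ := hp
    obtain ⟨Qq, rfl⟩ := hq
    exact ⟨Qp + Qq, derivative_add⟩
  | monomial n a =>
    refine ⟨C (a / (n + 1)) * X ^ (n + 1), ?_⟩
    rw [derivative_C_mul_X_pow, ← C_mul_X_pow_eq_monomial, Nat.add_sub_cancel, Nat.cast_succ,
      div_mul_cancel₀ _ (Nat.cast_add_one_ne_zero n)]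

/-- The solution is `Q = a⁻¹ ∑ₖ (-a⁻¹)ᵏ P⁽ᵏ⁾`, and `Q' + a Q = P` telescopes. -/
theorem exists_derivative_add_C_mul_eq {a : K} (ha : a ≠ 0) (P : K[X]) :
    ∃ Q : K[X], derivative Q + C a * Q = P := by
  set T : ℕ → K[X] := fun k => C ((-a⁻¹) ^ k) * derivative^[k] P
  set n := P.natDegree + 1
  refine ⟨∑ k ∈ Finset.range n, C a⁻¹ * T k, ?_⟩
  have hderiv : ∀ k, derivative (C a⁻¹ * T k) = -T (k + 1) := by
    intro k
    simp only [T, derivative_C_mul, ← mul_assoc, ← C_mul, Function.iterate_succ_apply',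
      pow_succ]
    simp [mul_comm]
  have hmul : ∀ k, C a * (C a⁻¹ * T k) = T k := by
    intro k
    rw [← mul_assoc, ← C_mul, mul_inv_cancel₀ ha, C_1, one_mul]
  have hvanish : T n = 0 := by
    simp [T, n, iterate_derivative_eq_zero (Nat.lt_succ_self _)]
  simp only [derivative_sum, Finset.mul_sum, hderiv, hmul, Finset.sum_neg_distrib]
  rw [neg_add_eq_sub, ← Finset.sum_sub_distrib, Finset.sum_range_sub', hvanish]
  simp [T]

end Polynomial

section

variable {E : Type*} [NormedAddCommGroup E] [NormedSpace ℝ E]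

theorem norm_sub_le_of_norm_deriv_le_deriv {f f' : ℝ → E} {B B' : ℝ → ℝ} {a t : ℝ}
    (hf : ∀ s, a ≤ s → HasDerivAt f (f' s) s) (hB : ∀ s, HasDerivAt B (B' s) s)
    (hbound : ∀ s, a ≤ s → ‖f' s‖ ≤ B' s) (ht : a ≤ t) :
    ‖f t - f a‖ ≤ B t - B a :=
  image_norm_le_of_norm_deriv_right_le_deriv_boundary (f := fun s => f s - f a)
    (B := fun s => B s - B a)
    (fun s hs => ((hf s hs.1).sub_const _).continuousAt.continuousWithinAt)
    (fun s hs => ((hf s hs.1).sub_const _).hasDerivWithinAt) (by simp)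
    (fun s => (hB s).sub_const _) (fun s hs => hbound s hs.1) ⟨ht, le_rfl⟩

theorem hasDerivAt_exp_mul (c x : ℝ) :
    HasDerivAt (fun s => exp (c * s)) (c * exp (c * x)) x := by
  simpa [mul_comm] using ((hasDerivAt_id x).const_mul c).exp

/-- Variation of constants: `v = e^{α t} z` has derivative `e^{α t} g`. -/
theorem norm_le_exp_of_hasDerivAt_sub_smul {z g : ℝ → E} {α δ δ' C : ℝ}
    (hz : ∀ t, 0 ≤ t → HasDerivAt z (g t - α • z t) t)
    (hg : ∀ t, 0 ≤ t → ‖g t‖ ≤ C * exp (-δ * t))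
    (hδ'α : δ' < α) (hδ'δ : δ' ≤ δ) {t : ℝ} (ht : 0 ≤ t) :
    ‖z t‖ ≤ (‖z 0‖ + C / (α - δ')) * exp (-δ' * t) := by
  have hC : 0 ≤ C := by simpa using (norm_nonneg _).trans (hg 0 le_rfl)
  have hgap : 0 < α - δ' := sub_pos.2 hδ'α
  set v : ℝ → E := fun s => exp (α * s) • z s
  have hv : ∀ s, 0 ≤ s → HasDerivAt v (exp (α * s) • g s) s := by
    intro s hs
    refine ((hasDerivAt_exp_mul α s).smul (hz s hs)).congr_deriv ?_
    module
  have hB : ∀ s, HasDerivAt (fun s => C / (α - δ') * exp ((α - δ') * s))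
      (C * exp ((α - δ') * s)) s := by
    intro s
    refine ((hasDerivAt_exp_mul (α - δ') s).const_mul (C / (α - δ'))).congr_deriv ?_
    field_simp [hgap.ne']
  have hvbound : ∀ s, 0 ≤ s → ‖exp (α * s) • g s‖ ≤ C * exp ((α - δ') * s) := by
    intro s hs
    rw [norm_smul, norm_of_nonneg (exp_pos _).le]
    calc exp (α * s) * ‖g s‖ ≤ exp (α * s) * (C * exp (-δ * s)) := by gcongr; exact hg s hs
      _ = C * exp ((α - δ) * s) := by rw [mul_left_comm, ← exp_add]; ring_nf
      _ ≤ C * exp ((α - δ') * s) := by gcongr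
  have hvt : ‖v t‖ ≤ ‖z 0‖ + C / (α - δ') * exp ((α - δ') * t) := by
    have h := norm_sub_le_of_norm_deriv_le_deriv hv hB hvbound ht
    have h0 : v 0 = z 0 := by simp [v]
    have : 0 ≤ C / (α - δ') * exp ((α - δ') * 0) := by positivity
    calc ‖v t‖ ≤ ‖v 0‖ + ‖v t - v 0‖ := norm_le_insert' _ _
      _ ≤ _ := by rw [h0] at h ⊢; linarith
  have hzv : ‖z t‖ = exp (-(α * t)) * ‖v t‖ := by
    rw [norm_smul, norm_of_nonneg (exp_pos _).le, ← mul_assoc, ← exp_add]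
    simp
  have hαt : exp (-(α * t)) ≤ exp (-δ' * t) := by gcongr; nlinarith
  have hgapt : exp (-(α * t)) * exp ((α - δ') * t) = exp (-δ' * t) := by
    rw [← exp_add]; ring_nf
  calc ‖z t‖ ≤ exp (-(α * t)) * (‖z 0‖ + C / (α - δ') * exp ((α - δ') * t)) := by
        rw [hzv]; gcongr
    _ = ‖z 0‖ * exp (-(α * t)) + C / (α - δ') * exp (-δ' * t) := by rw [← hgapt]; ring
    _ ≤ (‖z 0‖ + C / (α - δ')) * exp (-δ' * t) := by rw [add_mul]; gcongr

theorem exists_norm_sub_le_exp_of_hasDerivAt [CompleteSpace E] {z g : ℝ → E} {δ C : ℝ}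
    (hz : ∀ t, 0 ≤ t → HasDerivAt z (g t) t)
    (hg : ∀ t, 0 ≤ t → ‖g t‖ ≤ C * exp (-δ * t)) (hδ : 0 < δ) :
    ∃ L : E, ∀ t, 0 ≤ t → ‖z t - L‖ ≤ C / δ * exp (-δ * t) := by
  have hC : 0 ≤ C := by simpa using (norm_nonneg _).trans (hg 0 le_rfl)
  have hB : ∀ s, HasDerivAt (fun s => -(C / δ * exp (-δ * s))) (C * exp (-δ * s)) s := by
    intro s
    refine ((hasDerivAt_exp_mul (-δ) s).const_mul (C / δ)).neg.congr_deriv ?_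
    field_simp [hδ.ne']
  have hcauchy : ∀ a t, 0 ≤ a → a ≤ t → ‖z t - z a‖ ≤ C / δ * exp (-δ * a) := by
    intro a t ha hat
    have h := norm_sub_le_of_norm_deriv_le_deriv (fun s hs => hz s (ha.trans hs)) hB
      (fun s hs => hg s (ha.trans hs)) hat
    have : 0 ≤ C / δ * exp (-δ * t) := by positivity
    linarith
  have hseq : CauchySeq z := by
    have hdecay : Tendsto (fun a => C / δ * exp (-δ * a)) atTop (nhds 0) := by
      simpa using (tendsto_exp_atBot.comp
        (tendsto_id.const_mul_atTop_of_neg (neg_neg_of_pos hδ))).const_mul (C / δ)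
    refine Metric.cauchySeq_iff'.2 fun ε hε => ?_
    obtain ⟨a, ha, haε⟩ :=
      ((eventually_ge_atTop 0).and (hdecay.eventually (gt_mem_nhds hε))).exists
    exact ⟨a, fun t hat => (dist_eq_norm _ _).trans_lt ((hcauchy a t ha hat).trans_lt haε)⟩
  obtain ⟨L, hL⟩ := cauchySeq_tendsto_of_complete hseq
  refine ⟨L, fun t ht => le_of_tendsto ((tendsto_const_nhds.sub hL).norm) ?_⟩
  filter_upwards [eventually_ge_atTop t] with s hs
  rw [← norm_neg, neg_sub]
  exact hcauchy t s ht hs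

end

theorem IsPolyVec.add_const {m : ℕ} {f : ℝ → Fin m → ℝ} (hf : IsPolyVec f) (c : Fin m → ℝ) :
    IsPolyVec fun t => f t + c := fun i => by
  obtain ⟨P, hP⟩ := hf i
  exact ⟨P + C (c i), fun t => by simp [hP]⟩

theorem IsPolyVec.exists_hasDerivAt_eq {m : ℕ} {p : ℝ → Fin m → ℝ} (hp : IsPolyVec p) (α : ℝ) :
    ∃ q, IsPolyVec q ∧ ∀ t, HasDerivAt q (-(α • q t) - p t) t := by
  choose P hP using hp
  have hsol : ∀ i, ∃ Q : ℝ[X], derivative Q + C α * Q = -P i := fun i => by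
    rcases eq_or_ne α 0 with rfl | hα
    · simpa using exists_derivative_eq (-P i)
    · exact exists_derivative_add_C_mul_eq hα (-P i)
  choose Q hQ using hsol
  refine ⟨fun t i => (Q i).eval t, fun i => ⟨Q i, fun _ => rfl⟩,
    fun t => hasDerivAt_pi.2 fun i => ((Q i).hasDerivAt t).congr_deriv ?_⟩
  have := congrArg (eval t) (hQ i)
  simp only [eval_add, eval_mul, eval_C, eval_neg] at this
  simp only [Pi.sub_apply, Pi.neg_apply, Pi.smul_apply, smul_eq_mul, hP]
  linarith

theorem stmt_2_general (m : ℕ) (α δ C : ℝ) (hδ : 0 < δ)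
    (w p g : ℝ → (Fin m → ℝ)) (hp : IsPolyVec p)
    (hw : ∀ t, 0 ≤ t → HasDerivAt w (g t - α • w t - p t) t)
    (hg : ∀ t, 0 ≤ t → ‖g t‖ ≤ C * Real.exp (-δ * t))
    (hcase : 0 < α ∨ (α = 0 ∧ ∃ M, ∀ t, 0 ≤ t → ‖w t‖ ≤ M)) :
    ∃ q : ℝ → (Fin m → ℝ), IsPolyVec q ∧
      (∀ t, HasDerivAt q (-(α • q t) - p t) t) ∧
      ∃ δ' ∈ Set.Ioc (0 : ℝ) δ, ∃ C' : ℝ,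
        ∀ t, 0 ≤ t → ‖w t - q t‖ ≤ C' * Real.exp (-δ' * t) := by
  obtain ⟨q, hq, hqd⟩ := hp.exists_hasDerivAt_eq α
  have hz : ∀ t, 0 ≤ t → HasDerivAt (w - q) (g t - α • (w - q) t) t := fun t ht =>
    ((hw t ht).sub (hqd t)).congr_deriv (by simp only [Pi.sub_apply, smul_sub]; abel)
  rcases hcase with hα | ⟨rfl, -⟩
  · have hδ' : min α δ / 2 < α := by linarith [min_le_left α δ]
    refine ⟨q, hq, hqd, min α δ / 2, ⟨by positivity, by linarith [min_le_right α δ]⟩, _,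
      fun t ht => norm_le_exp_of_hasDerivAt_sub_smul hz hg hδ' ?_ ht⟩
    linarith [min_le_right α δ, lt_min hα hδ]
  · obtain ⟨L, hL⟩ := exists_norm_sub_le_exp_of_hasDerivAt
      (fun t ht => by simpa using hz t ht) hg hδ
    refine ⟨fun t => q t + L, hq.add_const L, fun t => by simpa using (hqd t).add_const L,
      δ, ⟨hδ, le_rfl⟩, C / δ, fun t ht => ?_⟩
    simpa [sub_add_eq_sub_sub] using hL t ht

/-- ODE approximation lemma: if `w' + α w + p(t) = g(t)` with `p` polynomial,
`‖g(t)‖ ≤ C e^{-δ t}`, and either `α > 0` or (`α = 0` and `w` bounded), then there is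
a polynomial solution `q` of `q' + α q + p = 0` with `‖w(t) - q(t)‖ = O(e^{-δ' t})`
for some `δ' ∈ (0, δ]`. -/
theorem stmt_2 (m : ℕ) (α δ C : ℝ) (hα : 0 ≤ α) (hδ : 0 < δ)
    (w p g : ℝ → (Fin m → ℝ)) (hp : IsPolyVec p)
    (hw : ∀ t, 0 ≤ t → HasDerivAt w (g t - α • w t - p t) t)
    (hg : ∀ t, 0 ≤ t → ‖g t‖ ≤ C * Real.exp (-δ * t))
    (hcase : 0 < α ∨ (α = 0 ∧ ∃ M, ∀ t, 0 ≤ t → ‖w t‖ ≤ M)) :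
    ∃ q : ℝ → (Fin m → ℝ), IsPolyVec q ∧
      (∀ t, HasDerivAt q (-(α • q t) - p t) t) ∧
      ∃ δ' ∈ Set.Ioc (0 : ℝ) δ, ∃ C' : ℝ,
        ∀ t, 0 ≤ t → ‖w t - q t‖ ≤ C' * Real.exp (-δ' * t) :=
  stmt_2_general m α δ C hδ w p g hp hw hg hcase
end

section
/- For the set of multi-indices $GI = \{\bar\alpha=(\alpha_k)_{k=1}^\infty : \alpha_k\in\mathbb{Z}_{\ge0},\ \alpha_k=0 \text{ for all but finitely many } k\}$ with $|\bar\alpha|=\sum_k\alpha_k$ and $\|\bar\alpha\|=\sum_k k\alpha_k$, and for $\xi=(\xi_k)_{k=1}^\infty$ a sequence in a normed space, define $[\xi]^{\bar\alpha}=\prod_{\alpha_k>0}|\xi_k|^{\alpha_k}$ and $[[\xi]]_{d,n} = \big(\sum_{|\bar\alpha|=d,\ \|\bar\alpha\|=n}[\xi]^{2\bar\alpha}\big)^{1/2}$. Then for all $n\ge d\ge 1$ and $n'\ge d'\ge 1$: $[[\xi]]_{d,n}\cdot[[\xi]]_{d',n'} \le e^{d+d'}\,[[\xi]]_{d+d',\,n+n'}$.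 -/
/-!
Expanding the product of the two squared gauges gives a sum of `[ξ]^{2α} [ξ]^{2β} = [ξ]^{2(α+β)}`
over pairs `(α, β)`, and `α + β` is a multi-index with `|α + β| = d + d'` and
`‖α + β‖ = n + n'`. A given `γ` arises from at most `#{α ≤ γ} = ∏ (γ_k + 1) ≤ e^{|γ|}` pairs, so
`[[ξ]]_{d,n}² [[ξ]]_{d',n'}² ≤ e^{d+d'} [[ξ]]_{d+d',n+n'}²`; taking square roots leaves the factor
`e^{(d+d')/2} ≤ e^{d+d'}`.
-/

open scoped BigOperators

/-- The homogeneous gauge `[[ξ]]_{d,n}` of a sequence `ξ = (ξ_k)_{k≥1}` (indexed here by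
`k : ℕ` standing for the index `k+1`): the square root of the sum over multi-indices
`ᾱ ∈ GI` with `|ᾱ| = d` and `‖ᾱ‖ = n` of `[ξ]^{2ᾱ} = ∏ ‖ξ_k‖^{2α_k}`. -/
noncomputable def dinorm {V : Type*} [NormedAddCommGroup V] (ξ : ℕ → V) (d n : ℕ) : ℝ :=
  Real.sqrt (∑' α : {α : ℕ →₀ ℕ //
      (α.sum fun _ v => v) = d ∧ (α.sum fun k v => (k + 1) * v) = n},
    ∏ k ∈ (α : ℕ →₀ ℕ).support, ‖ξ k‖ ^ (2 * (α : ℕ →₀ ℕ) k))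

open Finset

section

variable {σ : Type*} [DecidableEq σ]

theorem card_antidiagonal_le_exp_degree (γ : σ →₀ ℕ) :
    (#(antidiagonal γ) : ℝ) ≤ Real.exp γ.degree := by
  have h_fst : #(antidiagonal γ) ≤ #(Iic γ) :=
    card_le_card_of_injOn Prod.fst
      (fun p hp => mem_Iic.2 (mem_antidiagonal.1 hp ▸ le_self_add))
      (fun p hp q hq h => Prod.ext h <| add_left_cancel <|
        (mem_antidiagonal.1 hp).trans ((congrArg (· + q.2) h).trans (mem_antidiagonal.1 hq)).symm)
  calc (#(antidiagonal γ) : ℝ) ≤ ∏ i ∈ γ.support, (1 + (γ i : ℝ)) := by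
        rw [Finsupp.card_Iic] at h_fst
        exact_mod_cast h_fst.trans_eq (prod_congr rfl fun i _ => by rw [Nat.card_Iic, add_comm])
    _ ≤ Real.exp γ.degree := by
        rw [Finsupp.degree_apply, Nat.cast_sum]
        exact Real.prod_one_add_le_exp_sum _ fun i => Nat.cast_nonneg _

theorem sum_mul_sum_le_exp_mul_sum {f : (σ →₀ ℕ) → ℝ} (hf₀ : ∀ α, 0 ≤ f α)
    (hf_add : ∀ α β, f (α + β) = f α * f β) {s t u : Finset (σ →₀ ℕ)}
    (hstu : ∀ α ∈ s, ∀ β ∈ t, α + β ∈ u) {D : ℕ} (hu : ∀ γ ∈ u, γ.degree ≤ D) :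
    (∑ α ∈ s, f α) * (∑ β ∈ t, f β) ≤ Real.exp D * ∑ γ ∈ u, f γ := by
  have h_maps : ∀ p ∈ s ×ˢ t, p.1 + p.2 ∈ u := fun p hp =>
    hstu _ (mem_product.1 hp).1 _ (mem_product.1 hp).2
  calc (∑ α ∈ s, f α) * (∑ β ∈ t, f β)
      = ∑ γ ∈ u, ∑ p ∈ s ×ˢ t with p.1 + p.2 = γ, f (p.1 + p.2) := by
        rw [sum_mul_sum, ← sum_product', sum_fiberwise_of_maps_to h_maps]
        simp only [hf_add]
    _ ≤ ∑ γ ∈ u, ∑ p ∈ antidiagonal γ, f (p.1 + p.2) := by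
        refine sum_le_sum fun γ _ => sum_le_sum_of_subset_of_nonneg ?_ fun p _ _ => hf₀ _
        exact fun p hp => mem_antidiagonal.2 (mem_filter.1 hp).2
    _ = ∑ γ ∈ u, #(antidiagonal γ) * f γ := by
        refine sum_congr rfl fun γ _ => ?_
        rw [sum_congr rfl fun p hp => congrArg f (mem_antidiagonal.1 hp), sum_const, nsmul_eq_mul]
    _ ≤ ∑ γ ∈ u, Real.exp D * f γ := by
        refine sum_le_sum fun γ hγ => mul_le_mul_of_nonneg_right ?_ (hf₀ γ)
        exact (card_antidiagonal_le_exp_degree γ).trans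
          (Real.exp_le_exp.2 (by exact_mod_cast hu γ hγ))
    _ = Real.exp D * ∑ γ ∈ u, f γ := (mul_sum _ _ _).symm

end

theorem succ_mul_apply_le_of_sum_eq {α : ℕ →₀ ℕ} {n : ℕ}
    (h : (α.sum fun k v => (k + 1) * v) = n) (k : ℕ) : (k + 1) * α k ≤ n := by
  by_cases hk : k ∈ α.support
  · exact h ▸ single_le_sum (f := fun i => (i + 1) * α i) (fun _ _ => Nat.zero_le _) hk
  · simp [Finsupp.notMem_support_iff.1 hk]

theorem le_indicator_range_of_sum_eq {α : ℕ →₀ ℕ} {n : ℕ}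
    (h : (α.sum fun k v => (k + 1) * v) = n) :
    α ≤ Finsupp.indicator (range n) fun _ _ => n := by
  intro k
  have hk := succ_mul_apply_le_of_sum_eq h k
  rw [Finsupp.indicator_apply]
  split_ifs with hkn
  · exact (Nat.le_mul_of_pos_left _ k.succ_pos).trans hk
  · rw [mem_range, not_lt] at hkn
    by_contra! h_pos
    have := Nat.le_mul_of_pos_right (k + 1) h_pos
    omega

/-- The multi-indices summed over in `dinorm ξ d n`; the `Iic` bound only makes finiteness
visible, see `mem_gaugeIndices`. -/
noncomputable def gaugeIndices (d n : ℕ) : Finset (ℕ →₀ ℕ) :=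
  {α ∈ Iic (Finsupp.indicator (range n) fun _ _ => n) |
    α.degree = d ∧ (α.sum fun k v => (k + 1) * v) = n}

theorem mem_gaugeIndices {d n : ℕ} {α : ℕ →₀ ℕ} :
    α ∈ gaugeIndices d n ↔ (α.sum fun _ v => v) = d ∧ (α.sum fun k v => (k + 1) * v) = n := by
  rw [gaugeIndices, mem_filter, mem_Iic]
  exact and_iff_right_of_imp fun h => le_indicator_range_of_sum_eq h.2

theorem add_mem_gaugeIndices {d n d' n' : ℕ} {α β : ℕ →₀ ℕ} (hα : α ∈ gaugeIndices d n)
    (hβ : β ∈ gaugeIndices d' n') : α + β ∈ gaugeIndices (d + d') (n + n') := by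
  rw [mem_gaugeIndices] at *
  constructor
  · rw [Finsupp.sum_add_index' (fun _ => rfl) fun _ _ _ => rfl, hα.1, hβ.1]
  · rw [Finsupp.sum_add_index' (fun _ => mul_zero _) fun _ _ _ => mul_add _ _ _, hα.2, hβ.2]

/-- `[ξ]^{2ᾱ}`. -/
noncomputable def gaugeMonomial {V : Type*} [NormedAddCommGroup V] (ξ : ℕ → V) (α : ℕ →₀ ℕ) : ℝ :=
  α.prod fun k v => ‖ξ k‖ ^ (2 * v)

section

variable {V : Type*} [NormedAddCommGroup V] (ξ : ℕ → V)

theorem gaugeMonomial_nonneg (α : ℕ →₀ ℕ) : 0 ≤ gaugeMonomial ξ α :=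
  prod_nonneg fun _ _ => pow_nonneg (norm_nonneg _) _

theorem gaugeMonomial_add (α β : ℕ →₀ ℕ) :
    gaugeMonomial ξ (α + β) = gaugeMonomial ξ α * gaugeMonomial ξ β :=
  Finsupp.prod_add_index' (fun _ => by simp) fun _ _ _ => by rw [mul_add, pow_add]

theorem dinorm_eq_sqrt_sum (d n : ℕ) :
    dinorm ξ d n = √(∑ α ∈ gaugeIndices d n, gaugeMonomial ξ α) := by
  rw [dinorm, ← Finset.tsum_subtype]
  exact congrArg _ ((Equiv.subtypeEquivRight fun _ => mem_gaugeIndices.symm).tsum_eq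
    fun α : gaugeIndices d n => gaugeMonomial ξ α)

theorem dinorm_mul_le_sqrt_exp_mul (d n d' n' : ℕ) :
    dinorm ξ d n * dinorm ξ d' n' ≤
      √(Real.exp ((d : ℝ) + (d' : ℝ))) * dinorm ξ (d + d') (n + n') := by
  have h_sum : (∑ α ∈ gaugeIndices d n, gaugeMonomial ξ α) *
      (∑ β ∈ gaugeIndices d' n', gaugeMonomial ξ β) ≤
        Real.exp (d + d' : ℕ) * ∑ γ ∈ gaugeIndices (d + d') (n + n'), gaugeMonomial ξ γ :=
    sum_mul_sum_le_exp_mul_sum (gaugeMonomial_nonneg ξ) (gaugeMonomial_add ξ)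
      (fun _ hα _ hβ => add_mem_gaugeIndices hα hβ) fun _ hγ => (mem_gaugeIndices.1 hγ).1.le
  rw [dinorm_eq_sqrt_sum, dinorm_eq_sqrt_sum, dinorm_eq_sqrt_sum,
    ← Real.sqrt_mul (sum_nonneg fun α _ => gaugeMonomial_nonneg ξ α),
    ← Real.sqrt_mul (Real.exp_nonneg _)]
  exact Real.sqrt_le_sqrt (by exact_mod_cast h_sum)

end

theorem stmt_8_general {V : Type*} [NormedAddCommGroup V] (ξ : ℕ → V)
    (d n d' n' : ℕ) :
    dinorm ξ d n * dinorm ξ d' n' ≤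
      Real.exp ((d : ℝ) + (d' : ℝ)) * dinorm ξ (d + d') (n + n') := by
  have h_exp : √(Real.exp ((d : ℝ) + (d' : ℝ))) ≤ Real.exp ((d : ℝ) + (d' : ℝ)) :=
    Real.sqrt_le_self_iff.2 (Or.inr (Real.one_le_exp (by positivity)))
  exact (dinorm_mul_le_sqrt_exp_mul ξ d n d' n').trans
    (mul_le_mul_of_nonneg_right h_exp (Real.sqrt_nonneg _))

/-- Multiplicative inequality for homogeneous gauges:
`[[ξ]]_{d,n} · [[ξ]]_{d',n'} ≤ e^{d+d'} [[ξ]]_{d+d', n+n'}`. -/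
theorem stmt_8 {V : Type*} [NormedAddCommGroup V] (ξ : ℕ → V)
    (d n d' n' : ℕ) (hd : 1 ≤ d) (hn : d ≤ n) (hd' : 1 ≤ d') (hn' : d' ≤ n') :
    dinorm ξ d n * dinorm ξ d' n' ≤
      Real.exp ((d : ℝ) + (d' : ℝ)) * dinorm ξ (d + d') (n + n') :=
  stmt_8_general ξ d n d' n'
end

section
/- With the homogeneous gauges as defined ($[[\xi]]_{d,n} = (\sum_{|\bar\alpha|=d,\|\bar\alpha\|=n}\prod_k |\xi_k|^{2\alpha_k})^{1/2}$), suppose $\xi=(\xi_k)$ is a sequence of vectors with $\xi_k$ an eigenvector-component weighted so that $(A^s\xi)_k = k^s \xi_k$ for $s\ge 0$. Then for any $\alpha, s\ge 0$ and $n\ge d\ge 1$: $[[A^\alpha\xi]]_{d,n} \le (d/n)^s\,[[A^{\alpha+s}\xi]]_{d,n}$. -/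
open scoped BigOperators

private lemma rpow_npow_comm (x : ℝ) (hx : 0 ≤ x) (y : ℝ) (m : ℕ) :
    (x ^ y) ^ m = (x ^ m) ^ y := by
  rw [← Real.rpow_natCast (x ^ y) m, ← Real.rpow_mul hx, mul_comm,
      Real.rpow_mul hx, Real.rpow_natCast]

private lemma keyFinite (d n : ℕ) :
    Finite {α : ℕ →₀ ℕ //
      (α.sum fun _ v => v) = d ∧ (α.sum fun k v => (k + 1) * v) = n} := by
  classical
  have hval : ∀ a : {α : ℕ →₀ ℕ //
      (α.sum fun _ v => v) = d ∧ (α.sum fun k v => (k + 1) * v) = n},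
      ∀ k, (a : ℕ →₀ ℕ) k ≤ d := by
    rintro ⟨a, ha1, ha2⟩ k
    by_cases hk : k ∈ a.support
    · calc a k ≤ ∑ j ∈ a.support, a j :=
          Finset.single_le_sum (fun j _ => Nat.zero_le _) hk
        _ = d := ha1
    · simp [Finsupp.notMem_support_iff.mp hk]
  have hzero : ∀ a : {α : ℕ →₀ ℕ //
      (α.sum fun _ v => v) = d ∧ (α.sum fun k v => (k + 1) * v) = n},
      ∀ k, n ≤ k → (a : ℕ →₀ ℕ) k = 0 := by
    rintro ⟨a, ha1, ha2⟩ k hk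
    by_contra h
    have hk' : k ∈ a.support := Finsupp.mem_support_iff.mpr h
    have h1 : (k + 1) * a k ≤ ∑ j ∈ a.support, (j + 1) * a j :=
      Finset.single_le_sum (f := fun j => (j + 1) * a j) (fun j _ => Nat.zero_le _) hk'
    have h2 : k + 1 ≤ (k + 1) * a k :=
      Nat.le_mul_of_pos_right _ (Nat.pos_of_ne_zero h)
    have h3 := h1.trans_eq ha2
    omega
  apply Finite.of_injective (fun a : {α : ℕ →₀ ℕ //
      (α.sum fun _ v => v) = d ∧ (α.sum fun k v => (k + 1) * v) = n} =>
    (fun k : Fin n => (⟨(a : ℕ →₀ ℕ) k, Nat.lt_succ_of_le (hval a k)⟩ : Fin (d + 1))))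
  intro a b hab
  ext k
  by_cases hk : k < n
  · have := congrFun hab ⟨k, hk⟩
    exact congrArg Fin.val this
  · rw [hzero a k (le_of_not_gt hk), hzero b k (le_of_not_gt hk)]

private lemma keyProd (d n : ℕ) (hd : 1 ≤ d) (a : ℕ →₀ ℕ)
    (ha1 : (a.sum fun _ v => v) = d) (ha2 : (a.sum fun k v => (k + 1) * v) = n) :
    (n : ℝ) / d ≤ ∏ k ∈ a.support, ((k : ℝ) + 1) ^ (a k) := by
  have hsupp : a.support.Nonempty := by
    rcases Finset.eq_empty_or_nonempty a.support with h | h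
    · exfalso
      have ha0 : a = 0 := Finsupp.support_eq_empty.mp h
      rw [ha0] at ha1
      simp at ha1
      omega
    · exact h
  set K := a.support.max' hsupp with hK
  have hKmem : K ∈ a.support := a.support.max'_mem hsupp
  have h1 : n ≤ (K + 1) * d := by
    rw [← ha2, ← ha1, Finsupp.sum, Finsupp.sum, Finset.mul_sum]
    apply Finset.sum_le_sum
    intro j hj
    exact Nat.mul_le_mul_right _ (Nat.succ_le_succ (a.support.le_max' j hj))
  have h2 : (K + 1 : ℕ) ≤ ∏ k ∈ a.support, (k + 1) ^ (a k) := by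
    calc (K + 1 : ℕ) ≤ (K + 1) ^ (a K) :=
          Nat.le_self_pow (by
            have := Finsupp.mem_support_iff.mp hKmem
            omega) _
      _ ≤ ∏ k ∈ a.support, (k + 1) ^ (a k) :=
          Finset.single_le_prod' (f := fun k => (k + 1) ^ a k)
            (fun j _ => Nat.one_le_pow _ _ (Nat.succ_pos _)) hKmem
  have h3 : (n : ℕ) ≤ d * ∏ k ∈ a.support, (k + 1) ^ (a k) := by
    calc n ≤ (K + 1) * d := h1
      _ ≤ (∏ k ∈ a.support, (k + 1) ^ (a k)) * d := Nat.mul_le_mul_right _ h2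
      _ = d * ∏ k ∈ a.support, (k + 1) ^ (a k) := Nat.mul_comm _ _
  have hd0 : (0 : ℝ) < d := by exact_mod_cast hd
  rw [div_le_iff₀ hd0]
  have h4 := (Nat.cast_le (α := ℝ)).mpr h3
  push_cast at h4
  calc (n : ℝ) ≤ d * ∏ k ∈ a.support, ((k : ℝ) + 1) ^ (a k) := h4
    _ = (∏ k ∈ a.support, ((k : ℝ) + 1) ^ (a k)) * d := mul_comm _ _


/-- The diagonal action of `A^s` on a sequence: `(A^s ξ)_k = k^s ξ_k`
(the `k`-th component, indexed here by `k : ℕ` standing for the index `k+1`). -/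
noncomputable def Apow {V : Type*} [NormedAddCommGroup V] [NormedSpace ℝ V]
    (s : ℝ) (ξ : ℕ → V) : ℕ → V :=
  fun k => ((k + 1 : ℝ) ^ s) • ξ k

/-- Poincaré-type inequality for homogeneous gauges:
`[[A^α ξ]]_{d,n} ≤ (d/n)^s [[A^{α+s} ξ]]_{d,n}` for `α, s ≥ 0` and `n ≥ d ≥ 1`. -/
theorem stmt_9 {V : Type*} [NormedAddCommGroup V] [NormedSpace ℝ V] (ξ : ℕ → V)
    (α s : ℝ) (hα : 0 ≤ α) (hs : 0 ≤ s) (d n : ℕ) (hd : 1 ≤ d) (hn : d ≤ n) :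
    dinorm (Apow α ξ) d n ≤ ((d : ℝ) / n) ^ s * dinorm (Apow (α + s) ξ) d n := by
  classical
  haveI := keyFinite d n
  have hn1 : 1 ≤ n := hd.trans hn
  have hn0 : (0 : ℝ) < n := by exact_mod_cast hn1
  have hd0 : (0 : ℝ) < d := by exact_mod_cast hd
  have hdn : (0 : ℝ) ≤ (d : ℝ) / n := by positivity
  set c : ℝ := ((d : ℝ) / n) ^ s with hc_def
  have hc : 0 ≤ c := Real.rpow_nonneg hdn s
  have hnorm : ∀ (t : ℝ) (k : ℕ), ‖Apow t ξ k‖ = ((k : ℝ) + 1) ^ t * ‖ξ k‖ := by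
    intro t k
    rw [Apow, norm_smul, Real.norm_eq_abs,
      abs_of_nonneg (Real.rpow_nonneg (by positivity) t)]
  have hterm : ∀ a : {α : ℕ →₀ ℕ //
      (α.sum fun _ v => v) = d ∧ (α.sum fun k v => (k + 1) * v) = n},
      (∏ k ∈ (a : ℕ →₀ ℕ).support, ‖Apow α ξ k‖ ^ (2 * (a : ℕ →₀ ℕ) k)) ≤
      c ^ 2 * ∏ k ∈ (a : ℕ →₀ ℕ).support, ‖Apow (α + s) ξ k‖ ^ (2 * (a : ℕ →₀ ℕ) k) := by
    rintro ⟨a, ha1, ha2⟩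
    simp only
    set Q : ℝ := ∏ k ∈ a.support, ((k : ℝ) + 1) ^ (a k) with hQ
    have hQ0 : 0 ≤ Q := Finset.prod_nonneg fun k _ => by positivity
    have hsplit : ∏ k ∈ a.support, ‖Apow (α + s) ξ k‖ ^ (2 * a k) =
        (∏ k ∈ a.support, ‖Apow α ξ k‖ ^ (2 * a k)) * (Q ^ 2) ^ s := by
      have step1 : ∀ k ∈ a.support,
          ‖Apow (α + s) ξ k‖ ^ (2 * a k) =
          ‖Apow α ξ k‖ ^ (2 * a k) * ((((k : ℝ) + 1) ^ (2 * a k) : ℝ)) ^ s := by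
        intro k _
        rw [hnorm, hnorm, Real.rpow_add (by positivity : (0:ℝ) < (k : ℝ) + 1)]
        rw [show ((k : ℝ) + 1) ^ α * ((k : ℝ) + 1) ^ s * ‖ξ k‖
            = (((k : ℝ) + 1) ^ α * ‖ξ k‖) * ((k : ℝ) + 1) ^ s by ring]
        rw [mul_pow, rpow_npow_comm _ (by positivity) s (2 * a k)]
      rw [Finset.prod_congr rfl step1, Finset.prod_mul_distrib]
      congr 1
      rw [Real.finset_prod_rpow _ _ (fun k _ => by positivity) s]
      congr 1
      rw [hQ, ← Finset.prod_pow]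
      exact Finset.prod_congr rfl fun k _ => by rw [← pow_mul, mul_comm (a k) 2]
    rw [hsplit, ← mul_assoc, mul_comm (c ^ 2) _, mul_assoc]
    apply le_mul_of_one_le_right (Finset.prod_nonneg fun k _ => by positivity)
    have hx : 1 ≤ ((d : ℝ) / n) * Q := by
      have := keyProd d n hd a ha1 ha2
      calc (1 : ℝ) = ((d : ℝ) / n) * ((n : ℝ) / d) := by field_simp
        _ ≤ ((d : ℝ) / n) * Q := by
            apply mul_le_mul_of_nonneg_left this (by positivity)
    have heq : c ^ 2 * (Q ^ 2) ^ s = ((((d : ℝ) / n) * Q) ^ 2) ^ s := by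
      rw [hc_def, rpow_npow_comm _ hdn s 2, ← Real.mul_rpow (by positivity) (by positivity)]
      congr 1
      ring
    rw [heq]
    calc (1 : ℝ) = (1 : ℝ) ^ s := (Real.one_rpow s).symm
      _ ≤ ((((d : ℝ) / n) * Q) ^ 2) ^ s :=
          Real.rpow_le_rpow zero_le_one (one_le_pow₀ hx) hs
  have hsum :
      (∑' a : {α : ℕ →₀ ℕ //
        (α.sum fun _ v => v) = d ∧ (α.sum fun k v => (k + 1) * v) = n},
        ∏ k ∈ (a : ℕ →₀ ℕ).support, ‖Apow α ξ k‖ ^ (2 * (a : ℕ →₀ ℕ) k)) ≤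
      c ^ 2 * ∑' a : {α : ℕ →₀ ℕ //
        (α.sum fun _ v => v) = d ∧ (α.sum fun k v => (k + 1) * v) = n},
        ∏ k ∈ (a : ℕ →₀ ℕ).support, ‖Apow (α + s) ξ k‖ ^ (2 * (a : ℕ →₀ ℕ) k) := by
    rw [← tsum_mul_left]
    exact Summable.tsum_le_tsum hterm Summable.of_finite Summable.of_finite
  rw [dinorm, dinorm]
  calc Real.sqrt _ ≤ Real.sqrt (c ^ 2 * _) := Real.sqrt_le_sqrt hsum
    _ = c * Real.sqrt _ := by rw [Real.sqrt_mul (sq_nonneg c), Real.sqrt_sq hc]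
end

section
/- Let $u$ be a smooth, divergence-free, periodic vector field on the $n$-torus. Then the nonlinear term of the Navier-Stokes equations satisfies the orthogonality relations $\langle (u\cdot\nabla)u, u\rangle_{L^2} = 0$, and in dimension $n=2$ additionally $\langle (u\cdot\nabla)u, \Delta u\rangle_{L^2} = 0$. -/
open MeasureTheory
open scoped Real BigOperators

/-- Partial derivative in the `i`-th coordinate direction on `ℝⁿ`. -/
noncomputable def pd {n : ℕ} (i : Fin n) (f : (Fin n → ℝ) → ℝ) (x : Fin n → ℝ) : ℝ :=
  fderiv ℝ f x (Pi.single i 1)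

variable {n : ℕ}

lemma pd_sum {ι : Type*} (s : Finset ι) (f : ι → (Fin n → ℝ) → ℝ) (i : Fin n) (x : Fin n → ℝ)
    (h : ∀ k ∈ s, DifferentiableAt ℝ (f k) x) :
    pd i (fun y => ∑ k ∈ s, f k y) x = ∑ k ∈ s, pd i (f k) x := by
  unfold pd
  rw [fderiv_fun_sum h]
  simp

lemma pd_mul (f g : (Fin n → ℝ) → ℝ) (i : Fin n) (x : Fin n → ℝ)
    (hf : DifferentiableAt ℝ f x) (hg : DifferentiableAt ℝ g x) :
    pd i (fun y => f y * g y) x = pd i f x * g x + f x * pd i g x := by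
  unfold pd
  rw [fderiv_fun_mul hf hg]
  simp
  ring

lemma pd_const_mul (c : ℝ) (f : (Fin n → ℝ) → ℝ) (i : Fin n) (x : Fin n → ℝ)
    (hf : DifferentiableAt ℝ f x) :
    pd i (fun y => c * f y) x = c * pd i f x := by
  unfold pd
  rw [fderiv_const_mul hf]
  simp

lemma pd_sub (f g : (Fin n → ℝ) → ℝ) (i : Fin n) (x : Fin n → ℝ)
    (hf : DifferentiableAt ℝ f x) (hg : DifferentiableAt ℝ g x) :
    pd i (fun y => f y - g y) x = pd i f x - pd i g x := by
  unfold pd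
  rw [fderiv_fun_sub hf hg]
  simp

lemma pd_contDiff (f : (Fin n → ℝ) → ℝ) (hf : ContDiff ℝ (⊤ : ℕ∞) f) (i : Fin n) :
    ContDiff ℝ (⊤ : ℕ∞) (pd i f) := by
  have h1 : ContDiff ℝ (⊤ : ℕ∞) (fderiv ℝ f) := hf.fderiv_right (by simp)
  exact h1.clm_apply contDiff_const

lemma fderiv_shift (f : (Fin n → ℝ) → ℝ) (v : Fin n → ℝ) (hf : Differentiable ℝ f)
    (h : ∀ y, f (y + v) = f y) (x : Fin n → ℝ) : fderiv ℝ f (x + v) = fderiv ℝ f x := by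
  have h1 : HasFDerivAt (fun y => f (y + v)) (fderiv ℝ f (x + v)) x := by
    have := (hf (x + v)).hasFDerivAt.comp x ((hasFDerivAt_id x).add_const v)
    simpa [Function.comp_def] using this
  rw [funext h] at h1
  exact h1.fderiv.symm

lemma pd_shift (f : (Fin n → ℝ) → ℝ) (v : Fin n → ℝ) (hf : Differentiable ℝ f)
    (h : ∀ y, f (y + v) = f y) (x : Fin n → ℝ) (i : Fin n) :
    pd i f (x + v) = pd i f x := by
  unfold pd; rw [fderiv_shift f v hf h x]

lemma pd_comm (f : (Fin n → ℝ) → ℝ) (hf : ContDiff ℝ (⊤ : ℕ∞) f) (i j : Fin n) (x : Fin n → ℝ) :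
    pd i (fun y => pd j f y) x = pd j (fun y => pd i f y) x := by
  have hd : Differentiable ℝ f := hf.differentiable (by simp)
  have h1 : ContDiff ℝ (⊤ : ℕ∞) (fderiv ℝ f) := hf.fderiv_right (by simp)
  have h2 : HasFDerivAt (fderiv ℝ f) (fderiv ℝ (fderiv ℝ f) x) x :=
    (h1.differentiable (by simp) x).hasFDerivAt
  have hsymm := second_derivative_symmetric (f := f) (fun y => (hd y).hasFDerivAt) h2
    (Pi.single i 1) (Pi.single j 1)
  have key : ∀ k m : Fin n, pd k (fun y => pd m f y) x =
      fderiv ℝ (fderiv ℝ f) x (Pi.single k 1) (Pi.single m 1) := by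
    intro k m
    show fderiv ℝ (fun y => (fderiv ℝ f y) (Pi.single m 1)) x (Pi.single k 1) = _
    rw [fderiv_clm_apply (h1.differentiable (by simp) x) (differentiableAt_const _)]
    simp
  rw [key, key]
  exact hsymm

lemma insertNth_shift {m : ℕ} (i : Fin (m + 1)) (x : Fin m → ℝ) :
    (i.insertNth (2 * π) x : Fin (m+1) → ℝ) = i.insertNth (0:ℝ) x + Pi.single i (2 * π) := by
  funext j
  rcases eq_or_ne j i with rfl | hj
  · simp
  · obtain ⟨k, rfl⟩ := Fin.exists_succAbove_eq hj
    simp [Pi.single_eq_of_ne (Fin.succAbove_ne i k)]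

lemma div_int_zero (m : ℕ) (f : Fin (m + 1) → (Fin (m + 1) → ℝ) → ℝ)
    (hf : ∀ i, ContDiff ℝ (⊤ : ℕ∞) (f i))
    (hper : ∀ i x, f i (x + Pi.single i (2 * π)) = f i x) :
    ∫ x in Set.Icc (0 : Fin (m + 1) → ℝ) (fun _ => 2 * π), ∑ i, pd i (f i) x = 0 := by
  have hle : (0 : Fin (m + 1) → ℝ) ≤ fun _ => 2 * π := fun i => by positivity
  have hc : Continuous fun x : Fin (m + 1) → ℝ =>
      ∑ i, fderiv ℝ (f i) x (Pi.single i 1) :=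
    continuous_finset_sum _ fun i _ =>
      (((hf i).fderiv_right (m := (⊤ : ℕ∞)) (by simp)).continuous).clm_apply continuous_const
  have hDT := integral_divergence_of_hasFDerivAt_off_countable
    (a := (0 : Fin (m + 1) → ℝ)) (b := fun _ => 2 * π) hle (fun x i => f i x)
    (fun x => ContinuousLinearMap.pi fun i => fderiv ℝ (f i) x) ∅ Set.countable_empty
    (continuousOn_pi.2 fun i => ((hf i).continuous).continuousOn)
    (fun x _ => hasFDerivAt_pi.2 fun i => ((hf i).differentiable (by simp) x).hasFDerivAt)
    (hc.continuousOn.integrableOn_compact isCompact_Icc)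
  simp only [ContinuousLinearMap.pi_apply] at hDT
  have hface : ∀ i : Fin (m + 1),
      (∫ x in Set.Icc ((0 : Fin (m + 1) → ℝ) ∘ i.succAbove)
          ((fun _ => 2 * π) ∘ i.succAbove), f i (i.insertNth ((fun _ : Fin (m+1) => 2 * π) i) x)) -
        (∫ x in Set.Icc ((0 : Fin (m + 1) → ℝ) ∘ i.succAbove)
          ((fun _ => 2 * π) ∘ i.succAbove), f i (i.insertNth ((0 : Fin (m+1) → ℝ) i) x)) = 0 := by
    intro i
    have : ∀ x : Fin m → ℝ, f i (i.insertNth ((fun _ : Fin (m+1) => 2 * π) i) x)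
        = f i (i.insertNth ((0 : Fin (m+1) → ℝ) i) x) := by
      intro x
      show f i (i.insertNth (2 * π) x) = f i (i.insertNth 0 x)
      rw [insertNth_shift, hper]
    simp only [this, sub_self]
  rw [show (fun x => ∑ i, pd i (f i) x) = fun x => ∑ i, fderiv ℝ (f i) x (Pi.single i 1) from rfl]
  rw [hDT, Finset.sum_eq_zero fun i _ => hface i]

lemma part1 (m : ℕ) (u : (Fin (m+1) → ℝ) → (Fin (m+1) → ℝ))
    (hsmooth : ContDiff ℝ (⊤ : ℕ∞) u)
    (hper : ∀ (x : Fin (m+1) → ℝ) (i : Fin (m+1)), u (x + Pi.single i (2 * π)) = u x)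
    (hdiv : ∀ x : Fin (m+1) → ℝ, (∑ i, pd i (fun y => u y i) x) = 0) :
    (∫ x in Set.Icc (0 : Fin (m+1) → ℝ) (fun _ => 2 * π),
      ∑ l, (∑ i, u x i * pd i (fun y => u y l) x) * u x l) = 0 := by
  have hul : ∀ l, ContDiff ℝ (⊤ : ℕ∞) (fun y => u y l) := fun l => (contDiff_pi.1 hsmooth) l
  have hdl : ∀ l, Differentiable ℝ (fun y => u y l) := fun l => (hul l).differentiable (by simp)
  set S : (Fin (m+1) → ℝ) → ℝ := fun y => ∑ l, u y l * u y l with hSdef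
  have hS : ContDiff ℝ (⊤ : ℕ∞) S := ContDiff.sum fun l _ => (hul l).mul (hul l)
  set f : Fin (m+1) → (Fin (m+1) → ℝ) → ℝ := fun i y => u y i * S y with hfdef
  have hf : ∀ i, ContDiff ℝ (⊤ : ℕ∞) (f i) := fun i => (hul i).mul hS
  have hperf : ∀ i x, f i (x + Pi.single i (2 * π)) = f i x := by
    intro i x
    simp only [hfdef, hSdef, hper x i]
  have claim : ∀ x, ∑ i, pd i (f i) x
      = 2 * ∑ l, (∑ i, u x i * pd i (fun y => u y l) x) * u x l := by
    intro x
    have hpdS : ∀ i, pd i S x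
        = ∑ l, (pd i (fun y => u y l) x * u x l + u x l * pd i (fun y => u y l) x) := by
      intro i
      rw [hSdef]
      rw [pd_sum _ _ _ _ (fun l _ => ((hdl l) x).fun_mul ((hdl l) x))]
      exact Finset.sum_congr rfl fun l _ => pd_mul _ _ _ _ ((hdl l) x) ((hdl l) x)
    calc ∑ i, pd i (f i) x
        = ∑ i, (pd i (fun y => u y i) x * S x + u x i * pd i S x) :=
          Finset.sum_congr rfl fun i _ =>
            pd_mul _ _ _ _ ((hdl i) x) ((hS.differentiable (by simp)) x)
      _ = (∑ i, pd i (fun y => u y i) x) * S x + ∑ i, u x i * pd i S x := by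
          rw [Finset.sum_add_distrib, Finset.sum_mul]
      _ = ∑ i, u x i * pd i S x := by rw [hdiv x, zero_mul, zero_add]
      _ = ∑ i, ∑ l, u x i * (pd i (fun y => u y l) x * u x l + u x l * pd i (fun y => u y l) x) := by
          refine Finset.sum_congr rfl fun i _ => ?_
          rw [hpdS i, Finset.mul_sum]
      _ = ∑ l, ∑ i, u x i * (pd i (fun y => u y l) x * u x l + u x l * pd i (fun y => u y l) x) :=
          Finset.sum_comm
      _ = 2 * ∑ l, (∑ i, u x i * pd i (fun y => u y l) x) * u x l := by
          rw [Finset.mul_sum]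
          refine Finset.sum_congr rfl fun l _ => ?_
          rw [Finset.sum_mul, Finset.mul_sum]
          exact Finset.sum_congr rfl fun i _ => by ring
  have hkey := div_int_zero m f hf hperf
  rw [funext claim] at hkey
  rw [MeasureTheory.integral_const_mul] at hkey
  linarith


lemma part2 (u : (Fin 2 → ℝ) → (Fin 2 → ℝ))
    (hsmooth : ContDiff ℝ (⊤ : ℕ∞) u)
    (hper : ∀ (x : Fin 2 → ℝ) (i : Fin 2), u (x + Pi.single i (2 * π)) = u x)
    (hdiv : ∀ x : Fin 2 → ℝ, (∑ i, pd i (fun y => u y i) x) = 0) :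
    (∫ x in Set.Icc (0 : Fin 2 → ℝ) (fun _ => 2 * π),
      ∑ l, (∑ i, u x i * pd i (fun y => u y l) x)
        * (∑ i, pd i (fun y => pd i (fun z => u z l) y) x)) = 0 := by
  have hul : ∀ l, ContDiff ℝ (⊤ : ℕ∞) (fun y => u y l) := fun l => (contDiff_pi.1 hsmooth) l
  have hdl : ∀ l, Differentiable ℝ (fun y => u y l) := fun l => (hul l).differentiable (by simp)
  set w : Fin 2 → Fin 2 → (Fin 2 → ℝ) → ℝ := fun i l => pd i (fun z => u z l) with hwdef
  have hwc : ∀ i l, ContDiff ℝ (⊤ : ℕ∞) (w i l) := fun i l => pd_contDiff _ (hul l) i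
  have hdw : ∀ i l, Differentiable ℝ (w i l) := fun i l => (hwc i l).differentiable (by simp)
  have hwper : ∀ i l j x, w i l (x + Pi.single j (2 * π)) = w i l x := by
    intro i l j x
    exact pd_shift _ _ (hdl l) (fun y => congrFun (hper y j) l) x i
  set Q : (Fin 2 → ℝ) → ℝ := fun y => ∑ i, ∑ l, w i l y * w i l y with hQdef
  have hQc : ContDiff ℝ (⊤ : ℕ∞) Q :=
    ContDiff.sum fun i _ => ContDiff.sum fun l _ => (hwc i l).mul (hwc i l)
  set A : Fin 2 → (Fin 2 → ℝ) → ℝ :=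
    fun j y => ∑ l, (∑ i, u y i * w i l y) * w j l y with hAdef
  have hAc : ∀ j, ContDiff ℝ (⊤ : ℕ∞) (A j) := fun j =>
    ContDiff.sum fun l _ =>
      (ContDiff.sum fun i _ => (hul i).mul (hwc i l)).mul (hwc j l)
  set g : Fin 2 → (Fin 2 → ℝ) → ℝ := fun j y => 2 * A j y - u y j * Q y with hgdef
  have hg : ∀ j, ContDiff ℝ (⊤ : ℕ∞) (g j) :=
    fun j => (contDiff_const.mul (hAc j)).sub ((hul j).mul hQc)
  have hgper : ∀ j x, g j (x + Pi.single j (2 * π)) = g j x := by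
    intro j x
    simp only [hgdef, hAdef, hQdef, hwper, hper x j]
  have claim : ∀ x, ∑ j, pd j (g j) x
      = 2 * ∑ l, (∑ i, u x i * w i l x) * (∑ i, pd i (w i l) x) := by
    intro x
    have hdin : ∀ l, DifferentiableAt ℝ (fun y => ∑ i, u y i * w i l y) x := by
      intro l
      exact DifferentiableAt.fun_sum fun i _ => ((hdl i) x).mul ((hdw i l) x)
    have hpdin : ∀ j l, pd j (fun y => ∑ i, u y i * w i l y) x
        = ∑ i, (w j i x * w i l x + u x i * pd j (w i l) x) := by
      intro j l
      rw [pd_sum _ _ _ _ (fun i _ => ((hdl i) x).fun_mul ((hdw i l) x))]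
      exact Finset.sum_congr rfl fun i _ => pd_mul _ _ _ _ ((hdl i) x) ((hdw i l) x)
    have hpdA : ∀ j, pd j (A j) x
        = ∑ l, ((∑ i, (w j i x * w i l x + u x i * pd j (w i l) x)) * w j l x
            + (∑ i, u x i * w i l x) * pd j (w j l) x) := by
      intro j
      rw [hAdef]
      rw [pd_sum _ _ _ _ (fun l _ => (hdin l).fun_mul ((hdw j l) x))]
      refine Finset.sum_congr rfl fun l _ => ?_
      rw [pd_mul _ _ _ _ (hdin l) ((hdw j l) x), hpdin j l]
    have hpdQ : ∀ j, pd j Q x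
        = ∑ i, ∑ l, (pd j (w i l) x * w i l x + w i l x * pd j (w i l) x) := by
      intro j
      rw [hQdef]
      rw [pd_sum _ _ _ _ (fun i _ => DifferentiableAt.fun_sum fun l _ => ((hdw i l) x).fun_mul ((hdw i l) x))]
      refine Finset.sum_congr rfl fun i _ => ?_
      rw [pd_sum _ _ _ _ (fun l _ => ((hdw i l) x).fun_mul ((hdw i l) x))]
      exact Finset.sum_congr rfl fun l _ => pd_mul _ _ _ _ ((hdw i l) x) ((hdw i l) x)
    have hpdg : ∀ j, pd j (g j) x
        = 2 * (∑ l, ((∑ i, (w j i x * w i l x + u x i * pd j (w i l) x)) * w j l x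
            + (∑ i, u x i * w i l x) * pd j (w j l) x))
          - (w j j x * Q x + u x j
            * (∑ i, ∑ l, (pd j (w i l) x * w i l x + w i l x * pd j (w i l) x))) := by
      intro j
      rw [hgdef]
      rw [pd_sub _ _ _ _ ((contDiff_const.mul (hAc j)).differentiable (by simp) x)
        (((hul j).mul hQc).differentiable (by simp) x)]
      rw [pd_const_mul _ _ _ _ ((hAc j).differentiable (by simp) x)]
      rw [pd_mul _ _ _ _ ((hdl j) x) (hQc.differentiable (by simp) x)]
      rw [hpdA j, hpdQ j]
    have hsym : ∀ l, pd 0 (w 1 l) x = pd 1 (w 0 l) x := fun l =>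
      pd_comm (fun z => u z l) (hul l) 0 1 x
    have hdiv2 : w 1 1 x = - w 0 0 x := by
      have := hdiv x
      rw [Fin.sum_univ_two] at this
      linarith
    rw [Fin.sum_univ_two, hpdg 0, hpdg 1]
    simp only [Fin.sum_univ_two, hQdef]
    rw [hsym 0, hsym 1, hdiv2]
    ring
  have hkey := div_int_zero 1 g hg hgper
  rw [funext claim] at hkey
  rw [MeasureTheory.integral_const_mul] at hkey
  have h2 : (∫ x in Set.Icc (0 : Fin 2 → ℝ) (fun _ => 2 * π),
      ∑ l, (∑ i, u x i * pd i (fun y => u y l) x)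
        * (∑ i, pd i (fun y => pd i (fun z => u z l) y) x))
      = ∫ x in Set.Icc (0 : Fin 2 → ℝ) (fun _ => 2 * π),
        ∑ l, (∑ i, u x i * w i l x) * (∑ i, pd i (w i l) x) := rfl
  rw [h2]
  linarith


/-- Orthogonality relations for the Navier-Stokes nonlinearity: for a smooth,
divergence-free, periodic field `u` on the `n`-torus (realized as the periodic box
`[0,2π]ⁿ`), `⟨(u·∇)u, u⟩_{L²} = 0`, and in dimension `n = 2` additionally
`⟨(u·∇)u, Δu⟩_{L²} = 0`. -/
theorem stmt_18 (n : ℕ) (hn : 1 ≤ n) (u : (Fin n → ℝ) → (Fin n → ℝ))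
    (hsmooth : ContDiff ℝ (⊤ : ℕ∞) u)
    (hper : ∀ (x : Fin n → ℝ) (i : Fin n), u (x + Pi.single i (2 * π)) = u x)
    (hdiv : ∀ x : Fin n → ℝ, (∑ i, pd i (fun y => u y i) x) = 0)
    (B : Set (Fin n → ℝ)) (hB : B = Set.Icc (0 : Fin n → ℝ) (fun _ => 2 * π)) :
    (∫ x in B, ∑ l, (∑ i, u x i * pd i (fun y => u y l) x) * u x l) = 0 ∧
      (n = 2 →
        (∫ x in B, ∑ l, (∑ i, u x i * pd i (fun y => u y l) x)
            * (∑ i, pd i (fun y => pd i (fun z => u z l) y) x)) = 0) := by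
  subst hB
  obtain ⟨m, rfl⟩ : ∃ m, n = m + 1 := ⟨n - 1, by omega⟩
  refine ⟨part1 m u hsmooth hper hdiv, fun h2 => ?_⟩
  have hm : m = 1 := by omega
  subst hm
  exact part2 u hsmooth hper hdiv
end
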